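/- Let G and G' be two graphs on the same vertex set having the same 3-element homogeneous subsets, and let U be their Boolean sum G ∔ G'. If U contains no triangle, then every connected component of U is a cycle of even length, a path, or an isolated vertex; in particular U is bipartite. -/

import Mathlib

/-! In `U = G ∔ G'`, let `u v w` be a path of `U` with `u ≠ w`. Triangle-freeness makes `uw` a
non-edge of `U`, so `G` and `G'` agree on `uw` and disagree on `uv` and `vw`; as `{u, v, w}` is
homogeneous in `G` exactly when it is in `G'`, the pairs `uv` and `vw` must have different
`G`-status. So at every vertex the `U`-edges alternate between edges and non-edges of `G`. Hence
`U` has maximum degree two, each component is a path or a cycle (a longest path of a component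
covers it), and alternation around a cycle forces its length to be even. -/

open SimpleGraph

/-- The claw `K_{1,3}`: vertex 0 joined to each of the pairwise
    nonadjacent vertices 1, 2, 3. -/
def claw : SimpleGraph (Fin 4) := SimpleGraph.fromRel (fun a _ => a = 0)

/-- A graph is claw-free if it has no induced subgraph isomorphic to `K_{1,3}`. -/
def ClawFree {V : Type*} (G : SimpleGraph V) : Prop := IsEmpty (claw ↪g G)

/-- The Boolean sum `G ∔ G'` of two graphs on the same vertex set: its edge set
    is the symmetric difference of the edge sets of `G` and `G'`. -/
def boolSum {V : Type*} (G G' : SimpleGraph V) : SimpleGraph V := G \ G' ⊔ G' \ G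

/-- `G` and `G'` have the same 3-element homogeneous subsets (a set being
    homogeneous if it is a clique or an independent set). -/
def SameHomog3 {V : Type*} (G G' : SimpleGraph V) : Prop :=
  ∀ s : Finset V, s.card = 3 →
    ((G.IsClique (s : Set V) ∨ Gᶜ.IsClique (s : Set V)) ↔
      (G'.IsClique (s : Set V) ∨ G'ᶜ.IsClique (s : Set V)))

/-- Every connected component of `G` is a cycle of even length, a path,
    or an isolated vertex. -/
def ComponentsEvenCyclePath {V : Type*} (G : SimpleGraph V) : Prop :=
  ∀ c : G.ConnectedComponent,
    (∃ n, 4 ≤ n ∧ Even n ∧ Nonempty (G.induce c.supp ≃g cycleGraph n)) ∨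
    (∃ n, 1 ≤ n ∧ Nonempty (G.induce c.supp ≃g pathGraph n))

lemma Fin.sub_one_ne_add_one {k : ℕ} (a : Fin (k + 3)) : a - 1 ≠ a + 1 := by
  rw [Ne, sub_eq_iff_eq_add, add_assoc, left_eq_add, Fin.ext_iff, Fin.val_add]
  simp [Nat.mod_eq_of_lt (show 2 < k + 3 by omega)]

namespace SimpleGraph

variable {V W : Type*} {H : SimpleGraph V}

lemma isClique_or_isClique_compl_triple_iff {G : SimpleGraph V} {u v w : V}
    (huv : u ≠ v) (huw : u ≠ w) (hvw : v ≠ w) :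
    (G.IsClique ({u, v, w} : Set V) ∨ Gᶜ.IsClique ({u, v, w} : Set V)) ↔
      ((G.Adj u v ↔ G.Adj u w) ∧ (G.Adj u w ↔ G.Adj v w)) := by
  simp only [isClique_insert, isClique_singleton, Set.mem_insert_iff, Set.mem_singleton_iff,
    forall_eq_or_imp, forall_eq, compl_adj, ne_eq, huv, huw, hvw]
  tauto

lemma IsAlternating.comap {H G' : SimpleGraph V} {K : SimpleGraph W} (f : K ↪g H)
    (h : H.IsAlternating G') : K.IsAlternating (G'.comap f) :=
  fun _ _ _ hne hw hw' => h (f.injective.ne hne) (f.map_adj_iff.2 hw) (f.map_adj_iff.2 hw')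

def DegreeLeTwo (H : SimpleGraph V) : Prop :=
  ∀ ⦃v a b c : V⦄, H.Adj v a → H.Adj v b → H.Adj v c → a = b ∨ a = c ∨ b = c

lemma IsAlternating.degreeLeTwo {G' : SimpleGraph V} (h : H.IsAlternating G') :
    H.DegreeLeTwo := by
  intro v a b c ha hb hc
  by_contra! hne
  have := h hne.1 ha hb
  have := h hne.2.1 ha hc
  have := h hne.2.2 hb hc
  tauto

namespace DegreeLeTwo

variable (hdeg : H.DegreeLeTwo)
include hdeg

lemma eq_or_eq_of_adj {v a b w : V} (ha : H.Adj v a) (hb : H.Adj v b) (hab : a ≠ b)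
    (hw : H.Adj v w) : w = a ∨ w = b := by
  rcases hdeg hw ha hb with h | h | h
  exacts [.inl h, .inr h, absurd h hab]

variable {u v : V} {p : H.Walk u v} (hp : p.IsPath)
include hp

lemma eq_getVert_of_adj_getVert {i : ℕ} {w : V} (hi : 0 < i) (hin : i < p.length)
    (hw : H.Adj (p.getVert i) w) : w = p.getVert (i - 1) ∨ w = p.getVert (i + 1) := by
  have hprev : H.Adj (p.getVert i) (p.getVert (i - 1)) := by
    simpa [Nat.sub_add_cancel hi] using (p.adj_getVert_succ (i := i - 1) (by omega)).symm
  refine hdeg.eq_or_eq_of_adj hprev (p.adj_getVert_succ hin) (fun h => ?_) hw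
  have := hp.getVert_injOn (by simp; omega) (by simp; omega) h
  omega

lemma adj_getVert_of_lt {i j : ℕ} (hij : i < j) (hj : j ≤ p.length)
    (hadj : H.Adj (p.getVert i) (p.getVert j)) : j = i + 1 ∨ (i = 0 ∧ j = p.length) := by
  have hinj {k l : ℕ} (hk : k ≤ p.length) (hl : l ≤ p.length) (h : p.getVert k = p.getVert l) :
      k = l := hp.getVert_injOn (by simpa using hk) (by simpa using hl) h
  rcases Nat.eq_zero_or_pos i with rfl | hi
  · rcases lt_or_eq_of_le hj with hjn | rfl
    · rcases hdeg.eq_getVert_of_adj_getVert hp hij hjn hadj.symm with h | h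
      · have := hinj (by omega) (by omega) h; omega
      · have := hinj (by omega) (by omega) h; omega
    · exact .inr ⟨rfl, rfl⟩
  · rcases hdeg.eq_getVert_of_adj_getVert hp hi (by omega) hadj with h | h
    · have := hinj hj (by omega) h; omega
    · exact .inl (hinj hj (by omega) h)

lemma mem_support_of_forall_length_le (hconn : H.Connected)
    (hmax : ∀ (u' v' : V) (q : H.Walk u' v'), q.IsPath → q.length ≤ p.length) (w : V) :
    w ∈ p.support := by
  by_contra hw
  obtain ⟨q⟩ := hconn u w
  obtain ⟨⟨⟨x, z⟩, hxz⟩, -, hx, hz⟩ :=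
    q.exists_boundary_dart {x | x ∈ p.support} p.start_mem_support hw
  simp only [Set.mem_ofPred_eq] at hx hz hxz
  obtain ⟨i, rfl, hi⟩ := Walk.mem_support_iff_exists_getVert.1 hx
  rcases Nat.eq_zero_or_pos i with rfl | hi0
  · rw [Walk.getVert_zero] at hxz
    have := hmax _ _ _ (hp.cons hz (h := hxz.symm))
    simp at this
  rcases lt_or_eq_of_le hi with hin | rfl
  · rcases hdeg.eq_getVert_of_adj_getVert hp hi0 hin hxz with rfl | rfl <;>
      exact hz (p.getVert_mem_support _)
  · rw [Walk.getVert_length] at hxz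
    have := hmax _ _ _ (hp.concat hz hxz)
    simp at this

end DegreeLeTwo

lemma Walk.IsPath.bijective_getVert {u v : V} {p : H.Walk u v} (hp : p.IsPath)
    (hcover : ∀ w, w ∈ p.support) :
    Function.Bijective (fun a : Fin (p.length + 1) => p.getVert a) := by
  refine ⟨fun a b h => Fin.ext (hp.getVert_injOn (by simp; omega) (by simp; omega) h), fun w => ?_⟩
  obtain ⟨i, hi, hle⟩ := Walk.mem_support_iff_exists_getVert.1 (hcover w)
  exact ⟨⟨i, by omega⟩, hi⟩

lemma DegreeLeTwo.nonempty_iso_cycleGraph (hdeg : H.DegreeLeTwo) {n : ℕ} [NeZero n] (hn : 3 ≤ n)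
    (g : Fin n → V) (hg : g.Bijective) (hadj : ∀ a, H.Adj (g a) (g (a + 1))) :
    Nonempty (H ≃g cycleGraph n) := by
  obtain ⟨k, rfl⟩ : ∃ k, n = k + 3 := ⟨n - 3, by omega⟩
  refine ⟨(RelIso.mk (Equiv.ofBijective g hg) fun {a b} => ?_).symm⟩
  have hprev : H.Adj (g a) (g (a - 1)) := by simpa using (hadj (a - 1)).symm
  have hne : g (a - 1) ≠ g (a + 1) := hg.1.ne a.sub_one_ne_add_one
  simp only [Equiv.ofBijective_apply, ← mem_neighborSet (cycleGraph _), cycleGraph_neighborSet,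
    Set.mem_insert_iff, Set.mem_singleton_iff]
  constructor
  · intro h
    rcases hdeg.eq_or_eq_of_adj hprev (hadj a) hne h with h | h
    exacts [.inl (hg.1 h), .inr (hg.1 h)]
  · rintro (rfl | rfl)
    exacts [hprev, hadj a]

theorem Connected.nonempty_iso_pathGraph_or_cycleGraph [Finite V] (hconn : H.Connected)
    (hdeg : H.DegreeLeTwo) :
    (∃ n, 1 ≤ n ∧ Nonempty (H ≃g pathGraph n)) ∨ (∃ n, 3 ≤ n ∧ Nonempty (H ≃g cycleGraph n)) := by
  have := hconn.nonempty
  obtain ⟨u, v, p, hp, hmax⟩ := Walk.exists_isPath_forall_isPath_length_le_length H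
  have hg := hp.bijective_getVert (hdeg.mem_support_of_forall_length_le hp hconn hmax)
  set g : Fin (p.length + 1) → V := fun a => p.getVert a
  by_cases hcyc : H.Adj u v ∧ 2 ≤ p.length
  · refine .inr ⟨p.length + 1, by omega, hdeg.nonempty_iso_cycleGraph (by omega) g hg fun a => ?_⟩
    rcases eq_or_ne a (Fin.last _) with rfl | ha
    · simpa [g] using hcyc.1.symm
    · simpa [g, Fin.val_add_one, ha] using p.adj_getVert_succ (Fin.val_lt_last ha)
  have hchord {a b : Fin (p.length + 1)} (hab : a.val < b.val) (h : H.Adj (g a) (g b)) :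
      a.val + 1 = b.val := by
    rcases hdeg.adj_getVert_of_lt hp hab (by omega) h with h' | ⟨ha, hb⟩
    · exact h'.symm
    · have : ¬2 ≤ p.length := fun h2 => hcyc ⟨by simpa [g, ha, hb] using h, h2⟩
      omega
  refine .inl ⟨p.length + 1, by omega, ⟨(RelIso.mk (Equiv.ofBijective g hg) fun {a b} => ?_).symm⟩⟩
  simp only [Equiv.ofBijective_apply, pathGraph_adj]
  constructor
  · intro h
    rcases lt_trichotomy a.val b.val with hab | hab | hab
    · exact .inl (hchord hab h)
    · exact absurd (congrArg g (Fin.ext hab)) h.ne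
    · exact .inr (hchord hab h.symm)
  · rintro (h | h)
    · simpa [g, ← h] using p.adj_getVert_succ (i := a) (by omega)
    · simpa [g, ← h] using (p.adj_getVert_succ (i := b) (by omega)).symm

lemma IsAlternating.even_of_cycleGraph {n : ℕ} (hn : 3 ≤ n) {G' : SimpleGraph (Fin n)}
    (h : (cycleGraph n).IsAlternating G') : Even n := by
  obtain ⟨k, rfl⟩ : ∃ k, n = k + 3 := ⟨n - 3, by omega⟩
  have halt (a : Fin (k + 3)) : G'.Adj a (a + 1) ↔ ¬G'.Adj (a - 1) a := by
    rw [G'.adj_comm (a - 1)]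
    exact h a.sub_one_ne_add_one.symm (cycleGraph_adj.2 (.inr (add_sub_cancel_left _ _)))
      (cycleGraph_adj.2 (.inl (sub_sub_cancel _ _)))
  classical
  -- the `G'`-label of the edge `a (a + 1)` is a proper 2-colouring of the cycle
  let C : (cycleGraph (k + 3)).Coloring Bool :=
    Coloring.mk (fun a => decide (G'.Adj a (a + 1))) fun {a b} hab => by
      rw [← mem_neighborSet, cycleGraph_neighborSet, Set.mem_insert_iff,
        Set.mem_singleton_iff] at hab
      simp only [ne_eq, decide_eq_decide]
      rcases hab with rfl | rfl
      · have := halt a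
        rw [sub_add_cancel]
        tauto
      · have := halt (a + 1)
        rw [add_sub_cancel_right] at this
        tauto
  by_contra hodd
  have h3 := chromaticNumber_cycleGraph_of_odd _ (by omega) (Nat.not_even_iff_odd.1 hodd)
  have h2 := C.colorable.chromaticNumber_le
  rw [h3, Fintype.card_bool] at h2
  exact absurd h2 (by decide)

theorem IsAlternating.componentsEvenCyclePath [Finite V] {G' : SimpleGraph V}
    (h : H.IsAlternating G') : ComponentsEvenCyclePath H := by
  intro c
  have hc := h.comap (Embedding.induce c.supp)
  rcases c.connected_toSimpleGraph.nonempty_iso_pathGraph_or_cycleGraph hc.degreeLeTwo with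
    ⟨n, hn, hφ⟩ | ⟨n, hn, ⟨φ⟩⟩
  · exact .inr ⟨n, hn, hφ⟩
  · have heven := (hc.comap φ.symm.toEmbedding).even_of_cycleGraph hn
    exact .inl ⟨n, by rcases heven with ⟨m, rfl⟩; omega, heven, ⟨φ⟩⟩

end SimpleGraph

lemma boolSum_adj {V : Type*} {G G' : SimpleGraph V} {u v : V} :
    (boolSum G G').Adj u v ↔ ¬(G.Adj u v ↔ G'.Adj u v) := by
  simp only [boolSum, sup_adj, sdiff_adj]
  tauto

lemma boolSum_isAlternating {V : Type*} {G G' : SimpleGraph V} (h : SameHomog3 G G')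
    (htf : (boolSum G G').CliqueFree 3) : (boolSum G G').IsAlternating G := by
  classical
  intro v w w' hne hw hw'
  have hww' : ¬(boolSum G G').Adj w w' :=
    fun hadj => htf {v, w, w'} (is3Clique_triple_iff.2 ⟨hw, hw', hadj⟩)
  have hhomog := h {v, w, w'} (Finset.card_eq_three.2 ⟨v, w, w', hw.ne, hw'.ne, hne, rfl⟩)
  simp only [Finset.coe_insert, Finset.coe_singleton,
    isClique_or_isClique_compl_triple_iff hw.ne hw'.ne hne] at hhomog
  rw [boolSum_adj] at hw hw' hww'
  tauto

lemma ComponentsEvenCyclePath.colorable {V : Type*} {H : SimpleGraph V}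
    (h : ComponentsEvenCyclePath H) : H.Colorable 2 := by
  refine colorable_iff_forall_connectedComponent.2 fun c => ?_
  rcases h c with ⟨n, -, heven, ⟨φ⟩⟩ | ⟨n, -, ⟨φ⟩⟩
  · exact (cycleGraph.bicoloring_of_even n heven).colorable.of_hom φ.toHom
  · exact (pathGraph.bicoloring n).colorable.of_hom φ.toHom

/-- If `G` and `G'` have the same 3-element homogeneous subsets and their
    Boolean sum `U` contains no triangle, then every connected component of `U`
    is a cycle of even length, a path, or an isolated vertex; in particular `U`
    is bipartite. -/
theorem boolSum_triangleFree_components {V : Type*} [Fintype V]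
    (G G' : SimpleGraph V) (h : SameHomog3 G G')
    (htf : (boolSum G G').CliqueFree 3) :
    ComponentsEvenCyclePath (boolSum G G') ∧ (boolSum G G').Colorable 2 := by
  have hcomp := (boolSum_isAlternating h htf).componentsEvenCyclePath
  exact ⟨hcomp, hcomp.colorable⟩
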